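/- Let H be a separable complex Hilbert space and (T(t))_{t≥0} a C₀-semigroup of self-adjoint contractions on H which is stable but not exponentially stable. Then the set {x ∈ H : for every integer n ≥ 1, limsup_{t→∞} t^{1/n}‖T(t)x‖ = ∞ and liminf_{t→∞} t^{n}‖T(t)x‖ = 0} is a dense G_δ subset of H. -/

import Mathlib

open Filter Topology

/-- `T` is a C₀-semigroup of self-adjoint contractions on the complex Hilbert
space `H`. -/
def IsSelfAdjointContractionC0Semigroup {H : Type*} [NormedAddCommGroup H]
    [InnerProductSpace ℂ H] [CompleteSpace H] (T : ℝ → H →L[ℂ] H) : Prop :=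
  T 0 = 1 ∧
  (∀ s t : ℝ, 0 ≤ s → 0 ≤ t → T (s + t) = T s ∘L T t) ∧
  (∀ t : ℝ, 0 ≤ t → IsSelfAdjoint (T t)) ∧
  (∀ t : ℝ, 0 ≤ t → ‖T t‖ ≤ 1) ∧
  (∀ x : H, ContinuousOn (fun t : ℝ => T t x) (Set.Ici 0))

/-- `T` is exponentially stable. -/
def IsExpStable {H : Type*} [NormedAddCommGroup H] [InnerProductSpace ℂ H]
    (T : ℝ → H →L[ℂ] H) : Prop :=
  ∃ C > (0 : ℝ), ∃ a > (0 : ℝ), ∀ t : ℝ, 0 ≤ t → ‖T t‖ ≤ C * Real.exp (-(t * a))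

/-- `T` is (strongly) stable: every orbit tends to `0`. -/
def IsStable {H : Type*} [NormedAddCommGroup H] [InnerProductSpace ℂ H]
    (T : ℝ → H →L[ℂ] H) : Prop :=
  ∀ x : H, Tendsto (fun t : ℝ => ‖T t x‖) atTop (𝓝 0)

/-! ### Auxiliary lemmas -/

section Aux

variable {H : Type*} [NormedAddCommGroup H] [InnerProductSpace ℂ H] [CompleteSpace H]

/-- If the norm of the semigroup drops below `3/4` at some positive time, the semigroup is
exponentially stable. -/
lemma aux_expStable_of_norm_drop (T : ℝ → H →L[ℂ] H)
    (h0 : T 0 = 1) (hadd : ∀ s t : ℝ, 0 ≤ s → 0 ≤ t → T (s + t) = T s ∘L T t)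
    (hcontr : ∀ t : ℝ, 0 ≤ t → ‖T t‖ ≤ 1)
    {t₀ : ℝ} (ht₀ : 0 < t₀) (hq : ‖T t₀‖ ≤ 3 / 4) : IsExpStable T := by
  have hpow : ∀ n : ℕ, ‖T ((n : ℝ) * t₀)‖ ≤ (3 / 4 : ℝ) ^ n := by
    intro n
    induction n with
    | zero =>
      rw [Nat.cast_zero, zero_mul, h0, pow_zero, ContinuousLinearMap.one_def]
      exact ContinuousLinearMap.norm_id_le
    | succ n ih =>
      have hc : ((n + 1 : ℕ) : ℝ) * t₀ = t₀ + (n : ℝ) * t₀ := by push_cast; ring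
      rw [hc, hadd t₀ _ ht₀.le (by positivity)]
      calc ‖T t₀ ∘L T ((n : ℝ) * t₀)‖ ≤ ‖T t₀‖ * ‖T ((n : ℝ) * t₀)‖ :=
            ContinuousLinearMap.opNorm_comp_le _ _
        _ ≤ (3 / 4) * (3 / 4) ^ n := mul_le_mul hq ih (norm_nonneg _) (by norm_num)
        _ = (3 / 4 : ℝ) ^ (n + 1) := (pow_succ' _ _).symm
  have hlog : Real.log (3 / 4) < 0 := Real.log_neg (by norm_num) (by norm_num)
  refine ⟨4 / 3, by norm_num, -Real.log (3 / 4) / t₀, div_pos (neg_pos.mpr hlog) ht₀, ?_⟩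
  intro t ht
  set n := ⌊t / t₀⌋₊ with hn
  have h1 : (n : ℝ) * t₀ ≤ t := by
    have h := Nat.floor_le (div_nonneg ht ht₀.le)
    calc (n : ℝ) * t₀ ≤ (t / t₀) * t₀ := mul_le_mul_of_nonneg_right h ht₀.le
      _ = t := div_mul_cancel₀ t ht₀.ne'
  have h2 : t / t₀ - 1 < (n : ℝ) := Nat.sub_one_lt_floor _
  have hsplit : T t = T (t - (n : ℝ) * t₀) ∘L T ((n : ℝ) * t₀) := by
    rw [← hadd _ _ (by linarith) (by positivity), sub_add_cancel]
  have hb : ‖T t‖ ≤ (3 / 4 : ℝ) ^ n := by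
    rw [hsplit]
    calc ‖T (t - (n : ℝ) * t₀) ∘L T ((n : ℝ) * t₀)‖
        ≤ ‖T (t - (n : ℝ) * t₀)‖ * ‖T ((n : ℝ) * t₀)‖ := ContinuousLinearMap.opNorm_comp_le _ _
      _ ≤ 1 * (3 / 4 : ℝ) ^ n :=
          mul_le_mul (hcontr _ (by linarith)) (hpow n) (norm_nonneg _) zero_le_one
      _ = (3 / 4 : ℝ) ^ n := one_mul _
  refine hb.trans ?_
  have hexp : (3 / 4 : ℝ) ^ n = Real.exp ((n : ℝ) * Real.log (3 / 4)) := by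
    rw [Real.exp_nat_mul, Real.exp_log (by norm_num : (0 : ℝ) < 3 / 4)]
  rw [hexp]
  have hl43 : Real.log (4 / 3) = -Real.log (3 / 4) := by
    rw [show (4 / 3 : ℝ) = (3 / 4 : ℝ)⁻¹ by norm_num, Real.log_inv]
  have harg : (n : ℝ) * Real.log (3 / 4) ≤
      Real.log (4 / 3) + -(t * (-Real.log (3 / 4) / t₀)) := by
    have hmul : (n : ℝ) * Real.log (3 / 4) ≤ (t / t₀ - 1) * Real.log (3 / 4) := by
      nlinarith [hlog, h2]
    rw [hl43]
    calc (n : ℝ) * Real.log (3 / 4) ≤ (t / t₀ - 1) * Real.log (3 / 4) := hmul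
      _ = -Real.log (3 / 4) + -(t * (-Real.log (3 / 4) / t₀)) := by field_simp; ring
  calc Real.exp ((n : ℝ) * Real.log (3 / 4))
      ≤ Real.exp (Real.log (4 / 3) + -(t * (-Real.log (3 / 4) / t₀))) := Real.exp_le_exp.mpr harg
    _ = (4 / 3) * Real.exp (-(t * (-Real.log (3 / 4) / t₀))) := by
        rw [Real.exp_add, Real.exp_log (by norm_num : (0 : ℝ) < 4 / 3)]

/-- If the semigroup is not exponentially stable, then at each time there are almost-unit
vectors which are hardly contracted. -/
lemma aux_exists_big (T : ℝ → H →L[ℂ] H)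
    (h0 : T 0 = 1) (hadd : ∀ s t : ℝ, 0 ≤ s → 0 ≤ t → T (s + t) = T s ∘L T t)
    (hcontr : ∀ t : ℝ, 0 ≤ t → ‖T t‖ ≤ 1) (hnexp : ¬ IsExpStable T) :
    ∀ t : ℝ, 0 < t → ∃ u : H, ‖u‖ ≤ 1 ∧ 3 / 4 < ‖T t u‖ := by
  intro t ht
  by_contra hcon
  push_neg at hcon
  refine hnexp (aux_expStable_of_norm_drop T h0 hadd hcontr ht ?_)
  refine ContinuousLinearMap.opNorm_le_bound _ (by norm_num) ?_
  intro x
  rcases eq_or_ne x 0 with rfl | hx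
  · simp
  · have hxn : (0 : ℝ) < ‖x‖ := norm_pos_iff.mpr hx
    have hu : ‖(‖x‖⁻¹ : ℝ) • x‖ = 1 := by
      rw [norm_smul, Real.norm_of_nonneg (by positivity)]
      field_simp
    have hle := hcon ((‖x‖⁻¹ : ℝ) • x) hu.le
    have happ : T t x = ‖x‖ • T t ((‖x‖⁻¹ : ℝ) • x) := by
      rw [(T t).map_smul_of_tower, smul_smul, mul_inv_cancel₀ hxn.ne', one_smul]
    rw [happ, norm_smul, Real.norm_of_nonneg (norm_nonneg x)]
    calc ‖x‖ * ‖T t ((‖x‖⁻¹ : ℝ) • x)‖ ≤ ‖x‖ * (3 / 4) :=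
          mul_le_mul_of_nonneg_left hle (norm_nonneg x)
      _ = 3 / 4 * ‖x‖ := mul_comm _ _

/-- Elementary polynomial bound on `[0,1]`. -/
lemma aux_pow_mul_one_sub_le {x : ℝ} (h0 : 0 ≤ x) (h1 : x ≤ 1) (q : ℕ) :
    x ^ q * (1 - x) ≤ 1 / ((q : ℝ) + 1) := by
  rw [le_div_iff₀ (by positivity : (0 : ℝ) < (q : ℝ) + 1)]
  have hsum : ((q : ℝ) + 1) * x ^ q ≤ ∑ i ∈ Finset.range (q + 1), x ^ i := by
    have hterm : ∀ i ∈ Finset.range (q + 1), x ^ q ≤ x ^ i := fun i hi =>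
      pow_le_pow_of_le_one h0 h1 (Nat.lt_succ_iff.mp (Finset.mem_range.mp hi))
    have := Finset.card_nsmul_le_sum (Finset.range (q + 1)) (fun i => x ^ i) (x ^ q) hterm
    rwa [Finset.card_range, nsmul_eq_mul, Nat.cast_add, Nat.cast_one] at this
  have h2 : (1 - x) * (((q : ℝ) + 1) * x ^ q) ≤
      (1 - x) * ∑ i ∈ Finset.range (q + 1), x ^ i :=
    mul_le_mul_of_nonneg_left hsum (by linarith)
  have h3 : (1 - x) * (∑ i ∈ Finset.range (q + 1), x ^ i) = 1 - x ^ (q + 1) := by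
    have h := geom_sum_mul x (q + 1)
    linear_combination -h
  nlinarith [pow_nonneg h0 (q + 1), h2, h3]

/-- Characterization of `limsup = ⊤` in `EReal` for (coercions of) real functions. -/
lemma aux_limsup_top_iff (f : ℝ → ℝ) :
    limsup (fun t : ℝ => ((f t : ℝ) : EReal)) atTop = ⊤ ↔ ∀ K : ℝ, ∃ᶠ t in atTop, K < f t := by
  constructor
  · intro h K
    have hlt : ((K : ℝ) : EReal) < limsup (fun t : ℝ => ((f t : ℝ) : EReal)) atTop := by
      rw [h]; exact EReal.coe_lt_top K
    exact (frequently_lt_of_lt_limsup (by isBoundedDefault) hlt).mono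
      (fun t ht => EReal.coe_lt_coe_iff.mp ht)
  · intro h
    rw [EReal.eq_top_iff_forall_lt]
    intro y
    have h1 : ((y + 1 : ℝ) : EReal) ≤ limsup (fun t : ℝ => ((f t : ℝ) : EReal)) atTop :=
      le_limsup_of_frequently_le
        (((h (y + 1)).mono fun t ht => (EReal.coe_le_coe_iff.mpr ht.le)))
    exact lt_of_lt_of_le (EReal.coe_lt_coe_iff.mpr (lt_add_one y)) h1

/-- Characterization of `liminf = 0` in `EReal` for (coercions of) eventually-nonnegative
real functions. -/
lemma aux_liminf_zero_iff (f : ℝ → ℝ) (hf : ∀ᶠ t in atTop, 0 ≤ f t) :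
    liminf (fun t : ℝ => ((f t : ℝ) : EReal)) atTop = 0 ↔
      ∀ ε : ℝ, 0 < ε → ∃ᶠ t in atTop, f t < ε := by
  constructor
  · intro h ε hε
    have hlt : liminf (fun t : ℝ => ((f t : ℝ) : EReal)) atTop < ((ε : ℝ) : EReal) := by
      rw [h]
      exact_mod_cast hε
    exact (frequently_lt_of_liminf_lt (by isBoundedDefault) hlt).mono
      (fun t ht => EReal.coe_lt_coe_iff.mp ht)
  · intro h
    refine le_antisymm ?_ ?_
    · by_contra hc
      push_neg at hc
      obtain ⟨c, hc0, hcl⟩ := EReal.lt_iff_exists_real_btwn.mp hc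
      have hc0' : (0 : ℝ) < c := by exact_mod_cast hc0
      have hle : liminf (fun t : ℝ => ((f t : ℝ) : EReal)) atTop ≤ ((c : ℝ) : EReal) :=
        liminf_le_of_frequently_le
          (((h c hc0').mono fun t ht => EReal.coe_le_coe_iff.mpr ht.le))
      exact absurd (lt_of_lt_of_le hcl hle) (lt_irrefl _)
    · refine le_liminf_of_le (by isBoundedDefault) ?_
      exact hf.mono fun t ht => by exact_mod_cast ht

end Aux

/-- Corollary 3.1 of the paper, via polynomial decay rates: let
`(T(t))_{t ≥ 0}` be a stable but not exponentially stable `C₀`-semigroup of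
self-adjoint contractions on a separable complex Hilbert space `H`.  Then the
set of all `x ∈ H` such that, for every integer `n ≥ 1`,
`limsup_{t → ∞} t^{1/n} ‖T(t)x‖ = ∞` and `liminf_{t → ∞} t^{n} ‖T(t)x‖ = 0`
(limits computed in the extended reals) is a dense `G_δ` subset of `H`. -/
theorem polynomial_decay_dense_Gδ
    {H : Type*} [NormedAddCommGroup H] [InnerProductSpace ℂ H] [CompleteSpace H]
    [TopologicalSpace.SeparableSpace H]
    (T : ℝ → H →L[ℂ] H)
    (hsem : IsSelfAdjointContractionC0Semigroup T)
    (hstab : IsStable T) (hnexp : ¬ IsExpStable T) :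
    IsGδ {x : H | ∀ n : ℕ, 1 ≤ n →
        Filter.limsup (fun t : ℝ => ((t ^ ((1 : ℝ) / n) * ‖T t x‖ : ℝ) : EReal)) atTop = ⊤ ∧
        Filter.liminf (fun t : ℝ => ((t ^ (n : ℕ) * ‖T t x‖ : ℝ) : EReal)) atTop = 0} ∧
    Dense {x : H | ∀ n : ℕ, 1 ≤ n →
        Filter.limsup (fun t : ℝ => ((t ^ ((1 : ℝ) / n) * ‖T t x‖ : ℝ) : EReal)) atTop = ⊤ ∧
        Filter.liminf (fun t : ℝ => ((t ^ (n : ℕ) * ‖T t x‖ : ℝ) : EReal)) atTop = 0} := by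
  obtain ⟨h0, hadd, hsa, hcontr, -⟩ := hsem
  -- the space is nontrivial, since otherwise the semigroup would be exponentially stable
  haveI : Nontrivial H := by
    by_contra hH
    rw [not_nontrivial_iff_subsingleton] at hH
    refine hnexp ⟨1, one_pos, 1, one_pos, fun t _ => ?_⟩
    have hT0 : T t = 0 := by ext x; exact Subsingleton.elim _ _
    rw [hT0, norm_zero]
    positivity
  set S : H →L[ℂ] H := T 1 with hSdef
  have hSsa : IsSelfAdjoint S := hsa 1 one_pos.le
  have hSpos : (0 : H →L[ℂ] H) ≤ S := by
    have hhalf : S = T (1 / 2) * T (1 / 2) := by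
      have h := hadd (1 / 2) (1 / 2) (by norm_num) (by norm_num)
      norm_num at h
      exact h
    have hpos := star_mul_self_nonneg (T (1 / 2))
    rw [(hsa (1 / 2) (by norm_num)).star_eq] at hpos
    rw [hhalf]
    exact hpos
  have hS1 : ‖S‖ ≤ 1 := hcontr 1 one_pos.le
  have hspec : ∀ x ∈ spectrum ℝ S, 0 ≤ x ∧ x ≤ 1 := by
    intro x hx
    refine ⟨spectrum_nonneg_of_nonneg hSpos hx, ?_⟩
    have h := spectrum.norm_le_norm_of_mem hx
    rw [Real.norm_eq_abs] at h
    exact le_trans (le_abs_self x) (h.trans hS1)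
  -- key operator-norm bound via the continuous functional calculus
  have hkey : ∀ q : ℕ, ‖S ^ q * (1 - S)‖ ≤ 1 / ((q : ℝ) + 1) := by
    intro q
    have hb : ∀ x ∈ spectrum ℝ S, ‖x ^ q * (1 - x)‖ ≤ 1 / ((q : ℝ) + 1) := by
      intro x hx
      obtain ⟨hx0, hx1⟩ := hspec x hx
      rw [Real.norm_eq_abs, abs_of_nonneg (mul_nonneg (pow_nonneg hx0 q) (by linarith))]
      exact aux_pow_mul_one_sub_le hx0 hx1 q
    have h := norm_cfc_le (a := S) (show (0 : ℝ) ≤ 1 / ((q : ℝ) + 1) by positivity) hb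
    rwa [cfc_mul _ _ S, cfc_pow_id S q, cfc_sub (fun _ : ℝ => (1 : ℝ)) (fun x : ℝ => x) S,
      cfc_const_one ℝ S, cfc_id' ℝ S] at h
  -- the semigroup at integer times
  have hTn : ∀ j : ℕ, T (j : ℝ) = S ^ j := by
    intro j
    induction j with
    | zero => rw [Nat.cast_zero, h0, pow_zero]
    | succ j ih =>
      have hc : ((j + 1 : ℕ) : ℝ) = 1 + (j : ℝ) := by push_cast; ring
      rw [hc, hadd 1 j (by norm_num) (by positivity), ih, pow_succ']
      rfl
  -- monotonicity of orbit norms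
  have hmono : ∀ (x : H) (s t : ℝ), 0 ≤ s → s ≤ t → ‖T t x‖ ≤ ‖T s x‖ := by
    intro x s t hs hst
    have hsplit : T t = T (t - s) ∘L T s := by
      rw [← hadd _ _ (by linarith) hs, sub_add_cancel]
    rw [hsplit]
    calc ‖T (t - s) (T s x)‖ ≤ ‖T (t - s)‖ * ‖T s x‖ := ContinuousLinearMap.le_opNorm _ _
      _ ≤ 1 * ‖T s x‖ := mul_le_mul_of_nonneg_right (hcontr _ (by linarith)) (norm_nonneg _)
      _ = ‖T s x‖ := one_mul _
  -- dense range of (1 - S)^k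
  have hdr1 : DenseRange ⇑(1 - S) := by
    have hsaA : IsSelfAdjoint ((1 : H →L[ℂ] H) - S) := (IsSelfAdjoint.one (H →L[ℂ] H)).sub hSsa
    have horto : (LinearMap.range (((1 - S) : H →L[ℂ] H) : H →ₗ[ℂ] H))ᗮ = ⊥ := by
      rw [Submodule.eq_bot_iff]
      intro z hz
      have h1 : ∀ y : H, inner ℂ ((1 - S) y) z = (0 : ℂ) := fun y =>
        hz _ (LinearMap.mem_range_self _ y)
      have hmove : ∀ u v : H, inner ℂ (((1 : H →L[ℂ] H) - S) u) v
          = (inner ℂ u (((1 : H →L[ℂ] H) - S) v) : ℂ) := by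
        intro u v
        rw [← ContinuousLinearMap.adjoint_inner_left, hsaA.adjoint_eq]
      have h2 : inner ℂ ((1 - S) z) ((1 - S) z) = (0 : ℂ) := by
        rw [← hmove ((1 - S) z) z]
        exact h1 _
      have hAz : ((1 : H →L[ℂ] H) - S) z = 0 := inner_self_eq_zero.mp h2
      have hSz : S z = z := by
        have := hAz
        rw [ContinuousLinearMap.sub_apply, ContinuousLinearMap.one_apply, sub_eq_zero] at this
        exact this.symm
      have hpowz : ∀ j : ℕ, (S ^ j) z = z := by
        intro j
        induction j with
        | zero => simp
        | succ j ih => rw [pow_succ, ContinuousLinearMap.mul_apply, hSz, ih]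
      have hnorm : Tendsto (fun j : ℕ => ‖T ((j : ℕ) : ℝ) z‖) atTop (𝓝 0) :=
        (hstab z).comp tendsto_natCast_atTop_atTop
      have hconst : (fun j : ℕ => ‖T ((j : ℕ) : ℝ) z‖) = fun _ : ℕ => ‖z‖ := by
        funext j
        rw [hTn j, hpowz j]
      rw [hconst] at hnorm
      have hz0 : ‖z‖ = 0 := tendsto_nhds_unique tendsto_const_nhds hnorm
      exact norm_eq_zero.mp hz0
    have hdense : Dense ((LinearMap.range (((1 - S) : H →L[ℂ] H) : H →ₗ[ℂ] H) : Submodule ℂ H) : Set H) :=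
      Submodule.dense_iff_topologicalClosure_eq_top.mpr
        (Submodule.topologicalClosure_eq_top_iff.mpr horto)
    rw [LinearMap.coe_range] at hdense; exact hdense
  have hdrk : ∀ k : ℕ, DenseRange ⇑(((1 - S) ^ k : H →L[ℂ] H)) := by
    intro k
    induction k with
    | zero => simpa using denseRange_id
    | succ k ih =>
      have hps : ((1 - S) ^ (k + 1) : H →L[ℂ] H) = (1 - S) ^ k * (1 - S) := pow_succ _ _
      have hco : ⇑(((1 - S) ^ k : H →L[ℂ] H) * (1 - S)) = ⇑((1 - S) ^ k : H →L[ℂ] H) ∘ ⇑(1 - S) :=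
        rfl
      rw [hps, hco]
      exact ih.comp hdr1 ((1 - S) ^ k : H →L[ℂ] H).continuous
  -- the open sets
  set U : ℕ → ℕ → ℕ → Set H := fun n k m =>
    {x | ∃ t : ℝ, (m : ℝ) ≤ t ∧ (k : ℝ) < t ^ ((1 : ℝ) / ((n : ℝ) + 1)) * ‖T t x‖} with hUdef
  set V : ℕ → ℕ → ℕ → Set H := fun n k m =>
    {x | ∃ t : ℝ, (m : ℝ) ≤ t ∧ t ^ (n + 1 : ℕ) * ‖T t x‖ < 1 / ((k : ℝ) + 1)} with hVdef
  have hUopen : ∀ n k m, IsOpen (U n k m) := by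
    intro n k m
    rw [isOpen_iff_mem_nhds]
    rintro x ⟨t, htm, hlt⟩
    have hcont : Continuous fun y : H => t ^ ((1 : ℝ) / ((n : ℝ) + 1)) * ‖T t y‖ :=
      continuous_const.mul ((T t).continuous.norm)
    exact mem_of_superset ((isOpen_lt continuous_const hcont).mem_nhds hlt)
      (fun y hy => ⟨t, htm, hy⟩)
  have hVopen : ∀ n k m, IsOpen (V n k m) := by
    intro n k m
    rw [isOpen_iff_mem_nhds]
    rintro x ⟨t, htm, hlt⟩
    have hcont : Continuous fun y : H => t ^ (n + 1 : ℕ) * ‖T t y‖ :=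
      continuous_const.mul ((T t).continuous.norm)
    exact mem_of_superset ((isOpen_lt hcont continuous_const).mem_nhds hlt)
      (fun y hy => ⟨t, htm, hy⟩)
  -- density of the U sets
  have hUdense : ∀ n k m, Dense (U n k m) := by
    intro n k m
    rw [Metric.dense_iff]
    intro x r hr
    obtain ⟨t₀, ht₀⟩ := eventually_atTop.mp
      (Metric.tendsto_nhds.mp (hstab x) (r / 8) (by positivity))
    set a : ℝ := 4 * ((k : ℝ) + 1) / r with hadef
    have ha0 : 0 < a := by positivity
    set t : ℝ := max (max ((m : ℝ)) 1) (max t₀ (a ^ (n + 1))) with htdef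
    have ht1 : (1 : ℝ) ≤ t := le_trans (le_max_right _ _) (le_max_left _ _)
    have htm : (m : ℝ) ≤ t := le_trans (le_max_left _ _) (le_max_left _ _)
    have htt₀ : t₀ ≤ t := le_trans (le_max_left _ _) (le_max_right _ _)
    have hta : a ^ (n + 1) ≤ t := le_trans (le_max_right _ _) (le_max_right _ _)
    obtain ⟨u, hu1, hu34⟩ := aux_exists_big T h0 hadd hcontr hnexp t (by linarith)
    refine ⟨x + (r / 2) • u, ?_, ⟨t, htm, ?_⟩⟩
    · rw [Metric.mem_ball, dist_eq_norm, add_sub_cancel_left, norm_smul,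
        Real.norm_of_nonneg (by linarith)]
      nlinarith [hu1, hr]
    · have hTx : ‖T t x‖ < r / 8 := by
        have h := ht₀ t htt₀
        rwa [Real.dist_eq, sub_zero, abs_of_nonneg (norm_nonneg _)] at h
      have hTy : r / 4 < ‖T t (x + (r / 2) • u)‖ := by
        have hmap : T t (x + (r / 2) • u) = T t x + (r / 2) • T t u := by
          rw [map_add, (T t).map_smul_of_tower]
        have h1 : ‖(r / 2) • T t u‖ ≤ ‖T t x + (r / 2) • T t u‖ + ‖T t x‖ := by
          calc ‖(r / 2) • T t u‖ = ‖(T t x + (r / 2) • T t u) - T t x‖ := by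
                rw [add_sub_cancel_left]
            _ ≤ ‖T t x + (r / 2) • T t u‖ + ‖T t x‖ := norm_sub_le _ _
        have hnsmul : ‖(r / 2) • T t u‖ = (r / 2) * ‖T t u‖ := by
          rw [norm_smul, Real.norm_of_nonneg (by linarith)]
        have h2 : (r / 2) * (3 / 4) < (r / 2) * ‖T t u‖ :=
          mul_lt_mul_of_pos_left hu34 (by linarith)
        rw [hmap]
        linarith [h1, hnsmul ▸ h1]
      have hrt : a ≤ t ^ ((1 : ℝ) / ((n : ℝ) + 1)) := by
        have h1 : (a ^ (n + 1)) ^ ((1 : ℝ) / ((n : ℝ) + 1)) = a := by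
          have hc : ((n : ℝ) + 1) = ((n + 1 : ℕ) : ℝ) := by push_cast; ring
          rw [hc, one_div, Real.pow_rpow_inv_natCast ha0.le (by omega)]
        calc a = (a ^ (n + 1)) ^ ((1 : ℝ) / ((n : ℝ) + 1)) := h1.symm
          _ ≤ t ^ ((1 : ℝ) / ((n : ℝ) + 1)) := Real.rpow_le_rpow (by positivity) hta (by positivity)
      have hka : a * (r / 4) = (k : ℝ) + 1 := by
        rw [hadef]; field_simp
      calc (k : ℝ) < a * (r / 4) := by rw [hka]; linarith
        _ ≤ t ^ ((1 : ℝ) / ((n : ℝ) + 1)) * (r / 4) :=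
            mul_le_mul_of_nonneg_right hrt (by linarith)
        _ < t ^ ((1 : ℝ) / ((n : ℝ) + 1)) * ‖T t (x + (r / 2) • u)‖ :=
            mul_lt_mul_of_pos_left hTy (lt_of_lt_of_le ha0 hrt)
  -- density of the V sets
  have hVdense : ∀ n k m, Dense (V n k m) := by
    intro n k m
    rw [Metric.dense_iff]
    intro x r hr
    obtain ⟨z, hz⟩ := (hdrk (n + 2)).exists_dist_lt x hr
    refine ⟨((1 - S) ^ (n + 2) : H →L[ℂ] H) z, ?_, ?_⟩
    · rw [Metric.mem_ball, dist_comm]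
      exact hz
    · obtain ⟨q, hq⟩ := exists_nat_gt
        (max (m : ℝ) (((k : ℝ) + 1) * ((n : ℝ) + 2) ^ (n + 1) * (‖z‖ + 1)))
    -- use t = (n+2) * q
      refine ⟨(((n + 2) * q : ℕ) : ℝ), ?_, ?_⟩
      · have h1 : (m : ℝ) < q := lt_of_le_of_lt (le_max_left _ _) hq
        have h2 : (q : ℝ) ≤ (((n + 2) * q : ℕ) : ℝ) := by
          push_cast
          nlinarith [Nat.cast_nonneg (α := ℝ) q, Nat.cast_nonneg (α := ℝ) n]
        linarith
      · have hc : Commute (S ^ q) ((1 : H →L[ℂ] H) - S) :=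
          (Commute.one_right (S ^ q)).sub_right ((Commute.refl S).pow_left q)
        have hTt : T ((((n + 2) * q : ℕ) : ℝ)) (((1 - S) ^ (n + 2) : H →L[ℂ] H) z)
            = ((S ^ q * (1 - S)) ^ (n + 2)) z := by
          rw [hTn ((n + 2) * q), hc.mul_pow (n + 2), ← pow_mul, mul_comm q (n + 2)]
          rw [ContinuousLinearMap.mul_apply]
        have hnb : ‖((S ^ q * (1 - S)) ^ (n + 2)) z‖ ≤ (1 / ((q : ℝ) + 1)) ^ (n + 2) * ‖z‖ := by
          calc ‖((S ^ q * (1 - S)) ^ (n + 2)) z‖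
              ≤ ‖(S ^ q * (1 - S)) ^ (n + 2)‖ * ‖z‖ := ContinuousLinearMap.le_opNorm _ _
            _ ≤ ‖S ^ q * (1 - S)‖ ^ (n + 2) * ‖z‖ :=
                mul_le_mul_of_nonneg_right (norm_pow_le' _ (by omega)) (norm_nonneg z)
            _ ≤ (1 / ((q : ℝ) + 1)) ^ (n + 2) * ‖z‖ :=
                mul_le_mul_of_nonneg_right
                  (pow_le_pow_left₀ (norm_nonneg _) (hkey q) (n + 2)) (norm_nonneg z)
        have hTnorm : ‖T ((((n + 2) * q : ℕ) : ℝ)) (((1 - S) ^ (n + 2) : H →L[ℂ] H) z)‖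
            ≤ (1 / ((q : ℝ) + 1)) ^ (n + 2) * ‖z‖ := by
          rw [hTt]; exact hnb
        set Q : ℝ := (q : ℝ) with hQdef
        have hQ0 : (0 : ℝ) ≤ Q := Nat.cast_nonneg q
        have hcast : ((((n + 2) * q : ℕ)) : ℝ) = ((n : ℝ) + 2) * Q := by push_cast; ring
        have hQbig : ((k : ℝ) + 1) * ((n : ℝ) + 2) ^ (n + 1) * (‖z‖ + 1) < Q :=
          lt_of_le_of_lt (le_max_right _ _) hq
        have e3 : Q ^ (n + 1) * (1 / (Q + 1)) ^ (n + 1) ≤ 1 := by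
          rw [← mul_pow]
          refine pow_le_one₀ (by positivity) ?_
          rw [mul_one_div]
          exact div_le_one_of_le₀ (by linarith) (by positivity)
        calc ((((n + 2) * q : ℕ)) : ℝ) ^ (n + 1)
              * ‖T ((((n + 2) * q : ℕ) : ℝ)) (((1 - S) ^ (n + 2) : H →L[ℂ] H) z)‖
            ≤ ((((n + 2) * q : ℕ)) : ℝ) ^ (n + 1) * ((1 / (Q + 1)) ^ (n + 2) * ‖z‖) :=
              mul_le_mul_of_nonneg_left hTnorm (by positivity)
          _ = (((n : ℝ) + 2) ^ (n + 1) * ‖z‖) * (Q ^ (n + 1) * (1 / (Q + 1)) ^ (n + 1))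
              * (1 / (Q + 1)) := by
              rw [hcast, mul_pow, pow_succ (1 / (Q + 1)) (n + 1)]; ring
          _ ≤ (((n : ℝ) + 2) ^ (n + 1) * ‖z‖) * 1 * (1 / (Q + 1)) := by
              refine mul_le_mul_of_nonneg_right
                (mul_le_mul_of_nonneg_left e3 (by positivity)) (by positivity)
          _ = ((n : ℝ) + 2) ^ (n + 1) * ‖z‖ / (Q + 1) := by ring
          _ < 1 / ((k : ℝ) + 1) := by
              rw [div_lt_div_iff₀ (by positivity) (by positivity)]
              have h1 : ((n : ℝ) + 2) ^ (n + 1) * ‖z‖ * ((k : ℝ) + 1)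
                  ≤ ((k : ℝ) + 1) * ((n : ℝ) + 2) ^ (n + 1) * (‖z‖ + 1) := by
                nlinarith [norm_nonneg z,
                  pow_nonneg (show (0 : ℝ) ≤ (n : ℝ) + 2 by positivity) (n + 1),
                  Nat.cast_nonneg (α := ℝ) k]
              linarith
  -- identification of the target set with a countable intersection of the open sets
  have hchar : {x : H | ∀ n : ℕ, 1 ≤ n →
        Filter.limsup (fun t : ℝ => ((t ^ ((1 : ℝ) / n) * ‖T t x‖ : ℝ) : EReal)) atTop = ⊤ ∧
        Filter.liminf (fun t : ℝ => ((t ^ (n : ℕ) * ‖T t x‖ : ℝ) : EReal)) atTop = 0}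
      = ⋂ p : ℕ × ℕ × ℕ, (U p.1 p.2.1 p.2.2 ∩ V p.1 p.2.1 p.2.2) := by
    ext x
    simp only [Set.mem_setOf_eq, Set.mem_iInter, Prod.forall, Set.mem_inter_iff]
    constructor
    · intro hx n k m
      obtain ⟨hls, hli⟩ := hx (n + 1) (by omega)
      simp only [Nat.cast_add, Nat.cast_one] at hls hli
      constructor
      · have h := (aux_limsup_top_iff
          (fun t : ℝ => t ^ ((1 : ℝ) / ((n : ℝ) + 1)) * ‖T t x‖)).mp hls (k : ℝ)
        obtain ⟨t, htm, hlt⟩ := frequently_atTop.mp h (m : ℝ)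
        exact ⟨t, htm, hlt⟩
      · have hnonneg : ∀ᶠ t in atTop, 0 ≤ t ^ (n + 1 : ℕ) * ‖T t x‖ :=
          (eventually_ge_atTop (0 : ℝ)).mono fun t ht => by positivity
        have h := (aux_liminf_zero_iff
          (fun t : ℝ => t ^ (n + 1 : ℕ) * ‖T t x‖) hnonneg).mp hli
          (1 / ((k : ℝ) + 1)) (by positivity)
        obtain ⟨t, htm, hlt⟩ := frequently_atTop.mp h (m : ℝ)
        exact ⟨t, htm, hlt⟩
    · intro hx n hn
      obtain ⟨n', rfl⟩ : ∃ n', n = n' + 1 := ⟨n - 1, by omega⟩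
      simp only [Nat.cast_add, Nat.cast_one]
      constructor
      · refine (aux_limsup_top_iff
          (fun t : ℝ => t ^ ((1 : ℝ) / ((n' : ℝ) + 1)) * ‖T t x‖)).mpr ?_
        intro K
        refine frequently_atTop.mpr fun m' => ?_
        obtain ⟨k, hk⟩ := exists_nat_ge K
        obtain ⟨m, hm⟩ := exists_nat_ge m'
        obtain ⟨t, htm, hlt⟩ := (hx n' k m).1
        exact ⟨t, le_trans hm htm, lt_of_le_of_lt hk hlt⟩
      · have hnonneg : ∀ᶠ t in atTop, 0 ≤ t ^ (n' + 1 : ℕ) * ‖T t x‖ :=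
          (eventually_ge_atTop (0 : ℝ)).mono fun t ht => by positivity
        refine (aux_liminf_zero_iff
          (fun t : ℝ => t ^ (n' + 1 : ℕ) * ‖T t x‖) hnonneg).mpr ?_
        intro ε hε
        refine frequently_atTop.mpr fun m' => ?_
        obtain ⟨k, hk⟩ := exists_nat_one_div_lt hε
        obtain ⟨m, hm⟩ := exists_nat_ge m'
        obtain ⟨t, htm, hlt⟩ := (hx n' k m).2
        exact ⟨t, le_trans hm htm, lt_trans hlt hk⟩
  rw [hchar]
  constructor
  · exact IsGδ.iInter fun p => ((hUopen _ _ _).inter (hVopen _ _ _)).isGδ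
  · refine dense_iInter_of_isOpen (fun p => (hUopen _ _ _).inter (hVopen _ _ _))
      (fun p => ?_)
    exact (hUdense _ _ _).inter_of_isOpen_left (hVdense _ _ _) (hUopen _ _ _)
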